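/- arXiv:1307.3675 — 4 statements merged into one kernel-verified Lean document; each statement's English description precedes it below -/
import Mathlib

section
/- For any sets A, B ⊆ ℝ², every extreme point of the convex hull of the Minkowski sum A + B lies in the Minkowski sum of the extreme points: E(A + B) ⊆ E(A) + E(B), where A + B = {a + b : a ∈ A, b ∈ B}. -/
open Pointwise

/-- `E S` is the set of extreme points of the convex hull of `S ⊆ ℝ²`. -/
noncomputable def E (S : Set (ℝ × ℝ)) : Set (ℝ × ℝ) :=
  (convexHull ℝ S).extremePoints ℝ

lemma openSegment_add_mem {x a1 a2 b : ℝ × ℝ} (h : x ∈ openSegment ℝ a1 a2) :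
    x + b ∈ openSegment ℝ (a1 + b) (a2 + b) := by
  rw [add_comm x b, add_comm a1 b, add_comm a2 b]
  exact (mem_openSegment_translate ℝ b).2 h

/-- Every extreme point of the convex hull of the Minkowski sum `A + B` lies in
the Minkowski sum of the extreme points: `E(A + B) ⊆ E(A) + E(B)`. -/
theorem extremePoints_minkowski_subset (A B : Set (ℝ × ℝ)) :
    E (A + B) ⊆ E A + E B := by
  intro x hx
  unfold E at hx ⊢
  rw [convexHull_add] at hx
  obtain ⟨hmem, hext⟩ := hx
  obtain ⟨a, ha, b, hb, rfl⟩ := hmem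
  refine ⟨a, ⟨ha, ?_⟩, b, ⟨hb, ?_⟩, rfl⟩
  · intro a1 ha1 a2 ha2 hseg
    have h := hext ⟨a1, ha1, b, hb, rfl⟩ ⟨a2, ha2, b, hb, rfl⟩
      (openSegment_add_mem hseg)
    exact add_right_cancel h
  · intro b1 hb1 b2 hb2 hseg
    have hseg' : a + b ∈ openSegment ℝ (a + b1) (a + b2) := by
      have := openSegment_add_mem (b := a) hseg
      simpa [add_comm] using this
    have h := hext ⟨a, ha, b1, hb1, rfl⟩ ⟨a, ha, b2, hb2, rfl⟩ hseg'
    exact add_left_cancel h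
end

section
/- (Associativity of convex hull semiring addition, part of Theorem 1.) For any finite sets A, B, C ⊆ ℝ², E(E(A ∪ B) ∪ C) = E(A ∪ E(B ∪ C)), where E(S) denotes the set of extreme points of the convex hull of S. -/
lemma hull_E {S : Set (ℝ × ℝ)} (hS : S.Finite) :
    convexHull ℝ (E S) = convexHull ℝ S := by
  have hsub : E S ⊆ S := extremePoints_convexHull_subset
  apply Set.Subset.antisymm
  · exact convexHull_min (hsub.trans (subset_convexHull ℝ S)) (convex_convexHull ℝ S)
  · have hclosed : IsClosed (convexHull ℝ (E S)) :=
      (hS.subset hsub).isClosed_convexHull (𝕜 := ℝ)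
    have h := closure_convexHull_extremePoints (hS.isCompact_convexHull (𝕜 := ℝ)) (convex_convexHull ℝ S)
    rw [← h]
    exact closure_minimal subset_rfl hclosed

/-- Associativity of convex hull semiring addition `A ⊕ B = E(A ∪ B)`:
`(A ⊕ B) ⊕ C = A ⊕ (B ⊕ C)` for finite planar sets. -/
theorem semiring_add_assoc (A B C : Set (ℝ × ℝ))
    (hA : A.Finite) (hB : B.Finite) (hC : C.Finite) :
    E (E (A ∪ B) ∪ C) = E (A ∪ E (B ∪ C)) := by
  have key : convexHull ℝ (E (A ∪ B) ∪ C) = convexHull ℝ (A ∪ E (B ∪ C)) := by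
    rw [← convexHull_convexHull_union_left (E (A ∪ B)) C,
        ← convexHull_convexHull_union_right A (E (B ∪ C)),
        hull_E (hA.union hB), hull_E (hB.union hC),
        convexHull_convexHull_union_left, convexHull_convexHull_union_right,
        Set.union_assoc]
  show (convexHull ℝ (E (A ∪ B) ∪ C)).extremePoints ℝ = (convexHull ℝ (A ∪ E (B ∪ C))).extremePoints ℝ
  rw [key]
end

section
/- (Associativity of convex hull semiring multiplication, part of Theorem 1.) For any finite sets A, B, C ⊆ ℝ², E(E(A + B) + C) = E(A + E(B + C)), where + denotes Minkowski sum and E(S) denotes the set of extreme points of the convex hull of S. -/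
open Pointwise

lemma convexHull_E_eq (S : Set (ℝ × ℝ)) (hS : S.Finite) :
    convexHull ℝ (E S) = convexHull ℝ S := by
  have hEsub : E S ⊆ S := extremePoints_convexHull_subset
  refine le_antisymm (convexHull_mono hEsub) ?_
  have h1 : closure (convexHull ℝ (E S)) = convexHull ℝ S :=
    closure_convexHull_extremePoints (hS.isCompact_convexHull ℝ) (convex_convexHull ℝ S)
  have h2 : IsClosed (convexHull ℝ (E S)) :=
    ((hS.subset hEsub).isCompact_convexHull ℝ).isClosed
  rw [← h1, h2.closure_eq]

/-- Associativity of convex hull semiring multiplication `A ⊗ B = E(A + B)`,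
where `+` is Minkowski sum: `(A ⊗ B) ⊗ C = A ⊗ (B ⊗ C)` for finite planar sets. -/
theorem semiring_mul_assoc (A B C : Set (ℝ × ℝ))
    (hA : A.Finite) (hB : B.Finite) (hC : C.Finite) :
    E (E (A + B) + C) = E (A + E (B + C)) := by
  have h1 : convexHull ℝ (E (A + B) + C) = convexHull ℝ (A + E (B + C)) := by
    rw [convexHull_add, convexHull_add, convexHull_E_eq _ (hA.add hB),
      convexHull_E_eq _ (hB.add hC), convexHull_add, convexHull_add, add_assoc]
  show (convexHull ℝ (E (A + B) + C)).extremePoints ℝ = _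
  rw [h1]; rfl
end

section
/- (Strictly maximal lines have extreme dual points.) Let I be a finite index set, let j ∈ I, and for each i ∈ I let ℓᵢ(η) = mᵢη + bᵢ be a line with slope mᵢ ∈ ℝ and intercept bᵢ ∈ ℝ, where the dual points (mᵢ, −bᵢ) are pairwise distinct. If there exists η ∈ ℝ such that mⱼη + bⱼ > mᵢη + bᵢ for all i ≠ j, then the dual point (mⱼ, −bⱼ) is an extreme point of the convex hull of the set of all dual points {(mᵢ, −bᵢ) : i ∈ I}. -/
/-- Strictly maximal lines have extreme dual points: if the dual points
`(m i, -b i)` for `i ∈ I` are pairwise distinct, and at some `η` line `j` is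
strictly above every other line, then the dual point `(m j, -b j)` is an
extreme point of the convex hull of the set of all dual points. -/
theorem strictly_max_line_extreme_dual {ι : Type*} (I : Finset ι) (j : ι)
    (hj : j ∈ I) (m b : ι → ℝ)
    (hdist : ∀ i ∈ I, ∀ k ∈ I, i ≠ k → (m i, -b i) ≠ (m k, -b k))
    (hmax : ∃ η : ℝ, ∀ i ∈ I, i ≠ j → m j * η + b j > m i * η + b i) :
    (m j, -b j) ∈
      (convexHull ℝ ((fun i => (m i, -b i)) '' (I : Set ι))).extremePoints ℝ := by
  obtain ⟨η, hη⟩ := hmax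
  set g : ι → ℝ × ℝ := fun i => (m i, -b i) with hg
  set x : ℝ × ℝ := (m j, -b j) with hx
  set f : ℝ × ℝ → ℝ := fun p => p.1 * η - p.2 with hf
  set M : ℝ := m j * η + b j with hM
  have hval : ∀ i, f (g i) = m i * η + b i := fun i => by
    show m i * η - -b i = m i * η + b i; ring
  have hfx : f x = M := hval j
  have hMsum : ∀ a c : ℝ, a + c = 1 → a * M + c * M = M := fun a c h => by
    rw [← add_mul, h, one_mul]
  -- the target convex set
  set T : Set (ℝ × ℝ) := {p | f p ≤ M ∧ (f p = M → p = x)} with hT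
  have hTconv : Convex ℝ T := by
    rintro p ⟨hp1, hp2⟩ q ⟨hq1, hq2⟩ a c ha hc hac
    have hfcomb : f (a • p + c • q) = a * f p + c * f q := by
      simp [hf, Prod.smul_def, smul_eq_mul]; ring
    constructor
    · rw [hfcomb]
      have h1 := mul_le_mul_of_nonneg_left hp1 ha
      have h2 := mul_le_mul_of_nonneg_left hq1 hc
      have h3 := hMsum a c hac
      linarith
    · intro heq
      rw [hfcomb] at heq
      rcases eq_or_lt_of_le ha with ha0 | ha0
      · have hc1 : c = 1 := by linarith
        rw [← ha0, hc1] at heq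
        have : q = x := hq2 (by linarith)
        rw [← ha0, hc1, this]
        simp
      · rcases eq_or_lt_of_le hc with hc0 | hc0
        · have ha1 : a = 1 := by linarith
          rw [← hc0, ha1] at heq
          have : p = x := hp2 (by linarith)
          rw [← hc0, ha1, this]
          simp
        · have hfp : f p = M := by
            by_contra h
            have hlt : f p < M := lt_of_le_of_ne hp1 h
            have h1 := mul_lt_mul_of_pos_left hlt ha0
            have h2 := mul_le_mul_of_nonneg_left hq1 hc0.le
            have h3 := hMsum a c hac
            linarith
          have hfq : f q = M := by
            by_contra h
            have hlt : f q < M := lt_of_le_of_ne hq1 h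
            have h1 := mul_le_mul_of_nonneg_left hp1 ha0.le
            have h2 := mul_lt_mul_of_pos_left hlt hc0
            have h3 := hMsum a c hac
            linarith
          rw [hp2 hfp, hq2 hfq, ← add_smul, hac, one_smul]
  have hsub : g '' (I : Set ι) ⊆ T := by
    rintro _ ⟨i, hi, rfl⟩
    by_cases hgi : g i = x
    · rw [hgi]
      exact ⟨le_of_eq hfx, fun _ => rfl⟩
    · have hij : i ≠ j := by
        intro h; exact hgi (by rw [h])
      have hlt : f (g i) < M := by
        rw [hval i]; exact hη i hi hij
      exact ⟨le_of_lt hlt, fun h => absurd h (ne_of_lt hlt)⟩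
  have hhull : convexHull ℝ (g '' (I : Set ι)) ⊆ T := convexHull_min hsub hTconv
  have hxmem : x ∈ convexHull ℝ (g '' (I : Set ι)) :=
    subset_convexHull ℝ _ ⟨j, hj, rfl⟩
  rw [mem_extremePoints]
  refine ⟨hxmem, fun p hp q hq hseg => ?_⟩
  rw [openSegment_eq_image₂] at hseg
  obtain ⟨⟨a, c⟩, ⟨ha, hc, hac⟩, hcomb⟩ := hseg
  have hfp := hhull hp
  have hfq := hhull hq
  have hfcomb : a * f p + c * f q = M := by
    rw [← hfx, ← hcomb]
    simp [hf, Prod.smul_def, smul_eq_mul]; ring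
  have h3 := hMsum a c hac
  have hfpM : f p = M := by
    by_contra h
    have hlt : f p < M := lt_of_le_of_ne hfp.1 h
    have h1 := mul_lt_mul_of_pos_left hlt ha
    have h2 := mul_le_mul_of_nonneg_left hfq.1 hc.le
    linarith
  have hfqM : f q = M := by
    by_contra h
    have hlt : f q < M := lt_of_le_of_ne hfq.1 h
    have h1 := mul_le_mul_of_nonneg_left hfp.1 ha.le
    have h2 := mul_lt_mul_of_pos_left hlt hc
    linarith
  exact ⟨hfp.2 hfpM, hfq.2 hfqM⟩
end
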